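/- arXiv:1004.2795 — 3 statements merged into one kernel-verified Lean document; each statement's English description precedes it below -/
import Mathlib

section
/- Let q be a prime power, let l, n be positive integers, and let C be a linear code of length l+n over F_q. Suppose v_1,...,v_l ∈ C^⊥ are such that for each j the vector formed by the first l coordinates of v_j equals the j-th standard unit vector e_j of F_q^l, and let m = |(⋃_{j=1}^l supp(v_j)) \ {1,...,l}|. Let d_l^⊥ denote the l-th generalized Hamming weight of C^⊥, i.e. the minimum of |supp(D)| over all l-dimensional F_q-subspaces D of C^⊥, where supp(D) = ⋃_{x∈D} supp(x). Then m ≥ d_l^⊥ − l. -/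
/-
Restricting the `v_j` to the first `l` coordinates gives the standard basis of `F^l`, so the
`v_j` are linearly independent and span an `l`-dimensional subcode of `C^⊥`. Its support lies
in the union of the supports of the `v_j`, which has at most `m` coordinates outside the first
`l`, hence at most `m + l` in total.
-/

/-- The dual code of a linear code `C ⊆ F_q^N` under the standard inner product. -/
def dualCode {F : Type*} [Field F] {N : ℕ} (C : Submodule F (Fin N → F)) :
    Submodule F (Fin N → F) where
  carrier := {v | ∀ c ∈ C, ∑ h, v h * c h = 0}
  add_mem' := by
    intro a b ha hb c hc
    simp only [Set.mem_setOf_eq] at *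
    simp [Pi.add_apply, add_mul, Finset.sum_add_distrib, ha c hc, hb c hc]
  zero_mem' := by
    intro c hc
    simp
  smul_mem' := by
    intro r a ha c hc
    simp only [Set.mem_setOf_eq] at *
    simp [Pi.smul_apply, smul_eq_mul, mul_assoc, ← Finset.mul_sum, ha c hc]

/-- The support of a subspace `D ⊆ F_q^N`: the set of coordinates where some element of `D`
is nonzero. -/
def suppSpace {F : Type*} [Field F] {N : ℕ} (D : Submodule F (Fin N → F)) : Set (Fin N) :=
  {h | ∃ x ∈ D, x h ≠ 0}

/-- The `l`-th generalized Hamming weight of a linear code `D`: the minimum support size of an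
`l`-dimensional subcode of `D`. -/
noncomputable def genHammingWeight {F : Type*} [Field F] {N : ℕ} (l : ℕ)
    (D : Submodule F (Fin N → F)) : ℕ :=
  sInf {w | ∃ E : Submodule F (Fin N → F),
    E ≤ D ∧ Module.finrank F E = l ∧ w = (suppSpace E).ncard}

section

variable {F : Type*} [Field F] {N : ℕ}

theorem linearIndependent_of_restrict_eq_single {ι κ : Type*} [DecidableEq ι]
    (e : ι → κ) (v : ι → κ → F) (hv : ∀ j j', v j (e j') = if j' = j then 1 else 0) :
    LinearIndependent F v := by
  refine LinearIndependent.of_comp (LinearMap.funLeft F F e) ?_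
  convert Pi.linearIndependent_single_one ι F using 1
  ext j j'
  simp [LinearMap.funLeft, hv, Pi.single_apply]

theorem suppSpace_span_range_subset {ι : Type*} (v : ι → Fin N → F) :
    suppSpace (Submodule.span F (Set.range v)) ⊆ ⋃ j, {h | v j h ≠ 0} := by
  intro h ⟨x, hx, hxh⟩
  by_contra hh
  have hspan : Submodule.span F (Set.range v) ≤ LinearMap.ker (LinearMap.proj h) := by
    rw [Submodule.span_le]
    rintro _ ⟨j, rfl⟩
    simpa using fun hj => hh (Set.mem_iUnion.mpr ⟨j, hj⟩)
  exact hxh (hspan hx)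

theorem genHammingWeight_le_ncard_suppSpace {l : ℕ} {D E : Submodule F (Fin N → F)}
    (hED : E ≤ D) (hE : Module.finrank F E = l) :
    genHammingWeight l D ≤ (suppSpace E).ncard :=
  Nat.sInf_le ⟨E, hED, hE, rfl⟩

theorem genHammingWeight_le_ncard_iUnion_support {l : ℕ} {D : Submodule F (Fin N → F)}
    {v : Fin l → Fin N → F} (hvD : ∀ j, v j ∈ D) (hind : LinearIndependent F v) :
    genHammingWeight l D ≤ (⋃ j, {h | v j h ≠ 0}).ncard := by
  have hspanD : Submodule.span F (Set.range v) ≤ D := by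
    rw [Submodule.span_le]
    rintro _ ⟨j, rfl⟩
    exact hvD j
  have hrank : Module.finrank F (Submodule.span F (Set.range v)) = l := by
    rw [finrank_span_eq_card hind, Fintype.card_fin]
  calc genHammingWeight l D ≤ (suppSpace (Submodule.span F (Set.range v))).ncard :=
        genHammingWeight_le_ncard_suppSpace hspanD hrank
    _ ≤ (⋃ j, {h | v j h ≠ 0}).ncard :=
        Set.ncard_le_ncard (suppSpace_span_range_subset v) (Set.toFinite _)

end

theorem Fin.ncard_setOf_val_lt (l n : ℕ) : {h : Fin (l + n) | (h : ℕ) < l}.ncard = l := by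
  rw [← Fin.range_castLE (Nat.le_add_right l n),
    Set.ncard_range_of_injective (Fin.castLE_injective _), Nat.card_eq_fintype_card,
    Fintype.card_fin]

theorem access_group_ge_genHammingWeight_general
    (F : Type*) [Field F]
    (l n : ℕ)
    (C : Submodule F (Fin (l + n) → F))
    (v : Fin l → Fin (l + n) → F)
    (hv : ∀ j, v j ∈ dualCode C)
    (hunit : ∀ j j' : Fin l, v j (Fin.castAdd n j') = if j' = j then 1 else 0)
    (m : ℕ)
    (hm : m = ((⋃ j, {h | v j h ≠ 0}) \ {h : Fin (l + n) | (h : ℕ) < l}).ncard) :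
    genHammingWeight l (dualCode C) ≤ m + l := by
  have hind := linearIndependent_of_restrict_eq_single (Fin.castAdd n) v hunit
  calc genHammingWeight l (dualCode C) ≤ (⋃ j, {h | v j h ≠ 0}).ncard :=
        genHammingWeight_le_ncard_iUnion_support hv hind
    _ ≤ ((⋃ j, {h | v j h ≠ 0}) \ {h : Fin (l + n) | (h : ℕ) < l}).ncard
          + {h : Fin (l + n) | (h : ℕ) < l}.ncard :=
        Set.ncard_le_ncard_sdiff_add_ncard _ _
    _ = m + l := by rw [hm, Fin.ncard_setOf_val_lt]

/-- **Corollary 3**: if `v_1, …, v_l ∈ C^⊥` have the `j`-th standard unit vector of `F_q^l`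
as their first `l` coordinates, and `m` is the number of coordinates beyond the first `l` on
which some `v_j` is nonzero, then `m ≥ d_l^⊥ − l`, where `d_l^⊥` is the `l`-th generalized
Hamming weight of `C^⊥` (stated in the equivalent form `d_l^⊥ ≤ m + l`). -/
theorem access_group_ge_genHammingWeight
    (F : Type*) [Field F] [Fintype F]
    (l n : ℕ) (hl : 0 < l) (hn : 0 < n)
    (C : Submodule F (Fin (l + n) → F))
    (v : Fin l → Fin (l + n) → F)
    (hv : ∀ j, v j ∈ dualCode C)
    (hunit : ∀ j j' : Fin l, v j (Fin.castAdd n j') = if j' = j then 1 else 0)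
    (m : ℕ)
    (hm : m = ((⋃ j, {h | v j h ≠ 0}) \ {h : Fin (l + n) | (h : ℕ) < l}).ncard) :
    genHammingWeight l (dualCode C) ≤ m + l :=
  access_group_ge_genHammingWeight_general F l n C v hv hunit m hm
end

section
/- Let l, n be positive integers and let D be a binary linear code of length l+n (a linear subspace of F_2^{l+n}) with minimum Hamming weight δ. Suppose v_1,...,v_l ∈ D are such that for each j the vector formed by the first l coordinates of v_j equals the j-th standard unit vector e_j of F_2^l, and let m = |(⋃_{j=1}^l supp(v_j)) \ {1,...,l}|. If there exists a nonzero codeword c ∈ D with supp(c) ⊆ (⋃_{j=1}^l supp(v_j)) \ {1,...,l}, then 2m ≥ 3δ − 2, i.e. m ≥ (3/2)δ − 1. -/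
/-!
Over `𝔽₂` every coordinate lies in the support of exactly zero or two of `x`, `y`, `x + y`, so
`wt x + wt y + wt (x + y) = 2 |supp x ∪ supp y|`. Take `x = v_j` and `y = c`: coordinate `j`
shows that `v_j`, `c` and `v_j + c` are nonzero codewords, so the left side is at least `3δ`,
while `supp v_j ∪ supp c` lies in the `m` tail coordinates together with coordinate `j`.
-/

noncomputable def minWeight {N : ℕ} (D : Submodule (ZMod 2) (Fin N → ZMod 2)) : ℕ :=
  sInf {w | ∃ c ∈ D, c ≠ 0 ∧ w = hammingNorm c}

theorem hammingNorm_add_hammingNorm_add_hammingNorm_add {ι : Type*} [Fintype ι]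
    (x y : ι → ZMod 2) :
    hammingNorm x + hammingNorm y + hammingNorm (x + y) =
      2 * ({i | x i ≠ 0} ∪ {i | y i ≠ 0}).ncard := by
  classical
  have count_coord : ∀ a b : ZMod 2, (if a ≠ 0 then 1 else 0) + (if b ≠ 0 then 1 else 0) +
      (if a + b ≠ 0 then 1 else 0) = 2 * (if a ≠ 0 ∨ b ≠ 0 then 1 else 0 : ℕ) := by decide
  rw [← Set.ofPred_or, Set.ncard_eq_toFinset_card', Set.toFinset_ofPred]
  simp only [hammingNorm, Finset.card_filter, Pi.add_apply, ← Finset.sum_add_distrib, count_coord,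
    ← Finset.mul_sum]

theorem minWeight_le_hammingNorm {N : ℕ} {D : Submodule (ZMod 2) (Fin N → ZMod 2)}
    {c : Fin N → ZMod 2} (hc : c ∈ D) (hc0 : c ≠ 0) : minWeight D ≤ hammingNorm c :=
  Nat.sInf_le ⟨c, hc, hc0, rfl⟩

theorem three_mul_minWeight_le {N : ℕ} {D : Submodule (ZMod 2) (Fin N → ZMod 2)}
    {x y : Fin N → ZMod 2} (hx : x ∈ D) (hy : y ∈ D) (hx0 : x ≠ 0) (hy0 : y ≠ 0)
    (hxy : x + y ≠ 0) :
    3 * minWeight D ≤ 2 * ({i | x i ≠ 0} ∪ {i | y i ≠ 0}).ncard := by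
  rw [← hammingNorm_add_hammingNorm_add_hammingNorm_add]
  have := minWeight_le_hammingNorm hx hx0
  have := minWeight_le_hammingNorm hy hy0
  have := minWeight_le_hammingNorm (D.add_mem hx hy) hxy
  omega

theorem support_subset_insert_of_unit {R : Type*} [Zero R] [One R] {l n : ℕ}
    {u : Fin (l + n) → R} {j : Fin l}
    (hu : ∀ j' : Fin l, u (Fin.castAdd n j') = if j' = j then 1 else 0) :
    {h | u h ≠ 0} ⊆ insert (Fin.castAdd n j) ({h | u h ≠ 0} \ {h | (h : ℕ) < l}) := by
  intro h hh
  by_cases hlt : (h : ℕ) < l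
  · have hj : (⟨h, hlt⟩ : Fin l) = j := by
      by_contra hj
      exact hh (by simpa [hj] using hu ⟨h, hlt⟩)
    exact Or.inl (by rw [← hj]; rfl)
  · exact Or.inr ⟨hh, hlt⟩

theorem nonunique_tuple_size_bound_general
    (l n : ℕ) (hl : 0 < l)
    (D : Submodule (ZMod 2) (Fin (l + n) → ZMod 2))
    (δ : ℕ) (hδ : δ = minWeight D)
    (v : Fin l → Fin (l + n) → ZMod 2)
    (hv : ∀ j, v j ∈ D)
    (hunit : ∀ j j' : Fin l, v j (Fin.castAdd n j') = if j' = j then 1 else 0)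
    (m : ℕ)
    (hm : m = ((⋃ j, {h | v j h ≠ 0}) \ {h : Fin (l + n) | (h : ℕ) < l}).ncard)
    (hc : ∃ c ∈ D, c ≠ 0 ∧
        {h | c h ≠ 0} ⊆ (⋃ j, {h | v j h ≠ 0}) \ {h : Fin (l + n) | (h : ℕ) < l}) :
    3 * δ ≤ 2 * m + 2 := by
  obtain ⟨c, hcD, hc0, hcS⟩ := hc
  set S := (⋃ j, {h | v j h ≠ 0}) \ {h : Fin (l + n) | (h : ℕ) < l}
  let j : Fin l := ⟨0, hl⟩
  have hvj : v j (Fin.castAdd n j) = 1 := by simpa using hunit j j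
  have hcj : c (Fin.castAdd n j) = 0 := by
    by_contra hcj
    exact (hcS hcj).2 j.isLt
  have hv0 : v j ≠ 0 := fun h0 => by simp [h0] at hvj
  have hvc0 : v j + c ≠ 0 := fun h0 => by simpa [hvj, hcj] using congrFun h0 (Fin.castAdd n j)
  have hunion : {h | v j h ≠ 0} ∪ {h | c h ≠ 0} ⊆ insert (Fin.castAdd n j) S :=
    Set.union_subset
      ((support_subset_insert_of_unit (hunit j)).trans
        (Set.insert_subset_insert
          (Set.sdiff_subset_sdiff_left (Set.subset_iUnion (fun i => {h | v i h ≠ 0}) j))))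
      (hcS.trans (Set.subset_insert _ _))
  calc 3 * δ ≤ 2 * ({h | v j h ≠ 0} ∪ {h | c h ≠ 0}).ncard :=
        hδ ▸ three_mul_minWeight_le (hv j) hcD hv0 hc0 hvc0
    _ ≤ 2 * (insert (Fin.castAdd n j) S).ncard :=
        Nat.mul_le_mul_left 2 (Set.ncard_le_ncard hunion)
    _ ≤ 2 * m + 2 := by
        have := Set.ncard_insert_le (Fin.castAdd n j) S
        omega

/-- Key inequality in the proof of **Theorem 6**: let `D` be a binary code of length `l + n`
of minimum weight `δ`, let `v_1, …, v_l ∈ D` have the standard unit vectors of `F_2^l` as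
their first `l` coordinates, and let `m` be the number of coordinates beyond the first `l`
on which some `v_j` is nonzero.  If some nonzero `c ∈ D` is supported inside these `m`
coordinates, then `m ≥ (3/2)δ − 1` (stated in the equivalent integer form `3δ ≤ 2m + 2`). -/
theorem nonunique_tuple_size_bound
    (l n : ℕ) (hl : 0 < l) (hn : 0 < n)
    (D : Submodule (ZMod 2) (Fin (l + n) → ZMod 2))
    (δ : ℕ) (hδ : δ = minWeight D)
    (v : Fin l → Fin (l + n) → ZMod 2)
    (hv : ∀ j, v j ∈ D)
    (hunit : ∀ j j' : Fin l, v j (Fin.castAdd n j') = if j' = j then 1 else 0)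
    (m : ℕ)
    (hm : m = ((⋃ j, {h | v j h ≠ 0}) \ {h : Fin (l + n) | (h : ℕ) < l}).ncard)
    (hc : ∃ c ∈ D, c ≠ 0 ∧
        {h | c h ≠ 0} ⊆ (⋃ j, {h | v j h ≠ 0}) \ {h : Fin (l + n) | (h : ℕ) < l}) :
    3 * δ ≤ 2 * m + 2 :=
  nonunique_tuple_size_bound_general l n hl D δ hδ v hv hunit m hm hc
end

section
/- Let C be a binary linear code of length n (a linear subspace of F_2^n) and suppose the automorphism group of C, i.e. the group of permutations σ of {1,...,n} such that permuting coordinates by σ maps C onto itself, acts 2-transitively on {1,...,n}. Fix nonnegative integers (i,j,k,l) with i+j+k+l = n and two distinct positions h_1 ≠ h_2 in {1,...,n}. Let A_{i,j,k,l} be the number of pairs (u,v) ∈ C × C with n_{00}(u,v)=i, n_{01}(u,v)=j, n_{10}(u,v)=k, n_{11}(u,v)=l, and let N'_{h_1,h_2} be the number of such pairs that additionally satisfy (u_{h_1}, v_{h_1}) = (0,1) and (u_{h_2}, v_{h_2}) = (1,0). Then n(n−1) · N'_{h_1,h_2} = j·k · A_{i,j,k,l}. -/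
/-- `nab a b u v` is the number of coordinate positions `h` with `(u h, v h) = (a, b)`. -/
def nab {n : ℕ} (a b : ZMod 2) (u v : Fin n → ZMod 2) : ℕ :=
  (Finset.univ.filter fun h => u h = a ∧ v h = b).card

/-- `σ` is an automorphism of the binary code `C`: permuting coordinates by `σ` maps `C`
onto itself. -/
def IsCodeAut {n : ℕ} (C : Submodule (ZMod 2) (Fin n → ZMod 2)) (σ : Equiv.Perm (Fin n)) :
    Prop :=
  ∀ c : Fin n → ZMod 2, c ∈ C ↔ (c ∘ σ) ∈ C

/-!
Double counting. Count the triples `(p, h, h')` where `p` is a pair of codewords with pattern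
counts `(i, j, k, l)` and `h ≠ h'` are positions at which `p` reads `01` and `10`. For fixed `p`
there are `j * k` choices of `(h, h')`. For fixed `(h, h')`, an automorphism carrying
`(h₁, h₂)` to `(h, h')` permutes the codeword pairs without changing their pattern counts, so
it matches the pairs counted at `(h, h')` with those counted at `(h₁, h₂)`: each of the
`n(n−1)` choices of `(h, h')` contributes `N'`.
-/

open Finset

variable {n : ℕ}

lemma nab_comp (a b : ZMod 2) (u v : Fin n → ZMod 2) (σ : Equiv.Perm (Fin n)) :
    nab a b (u ∘ σ) (v ∘ σ) = nab a b u v :=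
  card_equiv σ (by simp)

def SwapPatternAt (a b : Fin n) (p : (Fin n → ZMod 2) × (Fin n → ZMod 2)) : Prop :=
  p.1 a = 0 ∧ p.2 a = 1 ∧ p.1 b = 1 ∧ p.2 b = 0

instance (a b : Fin n) : DecidablePred (SwapPatternAt a b) :=
  fun _ => inferInstanceAs (Decidable (_ ∧ _ ∧ _ ∧ _))

lemma swapPatternAt_comp (σ : Equiv.Perm (Fin n)) (a b : Fin n) (u v : Fin n → ZMod 2) :
    SwapPatternAt a b (u ∘ σ, v ∘ σ) ↔ SwapPatternAt (σ a) (σ b) (u, v) :=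
  Iff.rfl

lemma card_offDiag_filter_swapPatternAt (u v : Fin n → ZMod 2) :
    #{x ∈ (univ : Finset (Fin n)).offDiag | SwapPatternAt x.1 x.2 (u, v)}
      = nab 0 1 u v * nab 1 0 u v := by
  have hprod : ({x ∈ (univ : Finset (Fin n)).offDiag | SwapPatternAt x.1 x.2 (u, v)} :
        Finset (Fin n × Fin n))
      = ({h | u h = 0 ∧ v h = 1} : Finset (Fin n)) ×ˢ
          ({h | u h = 1 ∧ v h = 0} : Finset (Fin n)) := by
    ext ⟨a, b⟩
    simp only [mem_filter, mem_offDiag, mem_univ, true_and, mem_product]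
    unfold SwapPatternAt
    constructor
    · rintro ⟨-, ha₁, ha₂, hb₁, hb₂⟩
      exact ⟨⟨ha₁, ha₂⟩, hb₁, hb₂⟩
    · rintro ⟨⟨ha₁, ha₂⟩, hb₁, hb₂⟩
      refine ⟨?_, ha₁, ha₂, hb₁, hb₂⟩
      rintro rfl
      exact zero_ne_one (ha₁.symm.trans hb₁)
  rw [hprod, card_product]
  rfl

lemma sum_card_filter_swapPatternAt (S : Finset ((Fin n → ZMod 2) × (Fin n → ZMod 2))) :
    ∑ x ∈ (univ : Finset (Fin n)).offDiag, #{p ∈ S | SwapPatternAt x.1 x.2 p}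
      = ∑ p ∈ S, nab 0 1 p.1 p.2 * nab 1 0 p.1 p.2 :=
  (sum_card_bipartiteAbove_eq_sum_card_bipartiteBelow
    (r := fun (x : Fin n × Fin n) p => SwapPatternAt x.1 x.2 p)).trans
    (sum_congr rfl fun p _ => card_offDiag_filter_swapPatternAt p.1 p.2)

lemma card_filter_swapPatternAt_perm (S : Finset ((Fin n → ZMod 2) × (Fin n → ZMod 2)))
    (σ : Equiv.Perm (Fin n)) (hS : ∀ p, p ∈ S ↔ (p.1 ∘ σ, p.2 ∘ σ) ∈ S)
    (a b : Fin n) :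
    #{p ∈ S | SwapPatternAt (σ a) (σ b) p} = #{p ∈ S | SwapPatternAt a b p} := by
  let e := (σ.symm.arrowCongr (Equiv.refl (ZMod 2))).prodCongr
    (σ.symm.arrowCongr (Equiv.refl (ZMod 2)))
  refine card_equiv e fun p => ?_
  simp only [mem_filter]
  exact and_congr (hS p) (swapPatternAt_comp σ a b p.1 p.2).symm

open Classical in
noncomputable def codePairs (C : Submodule (ZMod 2) (Fin n → ZMod 2)) (i j k l : ℕ) :
    Finset ((Fin n → ZMod 2) × (Fin n → ZMod 2)) :=
  {p | p.1 ∈ C ∧ p.2 ∈ C ∧ nab 0 0 p.1 p.2 = i ∧ nab 0 1 p.1 p.2 = j ∧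
    nab 1 0 p.1 p.2 = k ∧ nab 1 1 p.1 p.2 = l}

lemma mem_codePairs {C : Submodule (ZMod 2) (Fin n → ZMod 2)} {i j k l : ℕ}
    {p : (Fin n → ZMod 2) × (Fin n → ZMod 2)} :
    p ∈ codePairs C i j k l ↔ p.1 ∈ C ∧ p.2 ∈ C ∧ nab 0 0 p.1 p.2 = i ∧
      nab 0 1 p.1 p.2 = j ∧ nab 1 0 p.1 p.2 = k ∧ nab 1 1 p.1 p.2 = l := by
  simp [codePairs]

lemma IsCodeAut.mem_codePairs_comp_iff {C : Submodule (ZMod 2) (Fin n → ZMod 2)}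
    {σ : Equiv.Perm (Fin n)} (hσ : IsCodeAut C σ) (i j k l : ℕ)
    (p : (Fin n → ZMod 2) × (Fin n → ZMod 2)) :
    p ∈ codePairs C i j k l ↔ (p.1 ∘ σ, p.2 ∘ σ) ∈ codePairs C i j k l := by
  simp only [mem_codePairs, nab_comp, ← hσ p.1, ← hσ p.2]

theorem two_transitive_aut_pattern_count_general
    (n : ℕ) (C : Submodule (ZMod 2) (Fin n → ZMod 2))
    (h2trans : ∀ h₁ h₂ h₁' h₂' : Fin n, h₁ ≠ h₂ → h₁' ≠ h₂' →
        ∃ σ : Equiv.Perm (Fin n), IsCodeAut C σ ∧ σ h₁ = h₁' ∧ σ h₂ = h₂')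
    (i j k l : ℕ)
    (h₁ h₂ : Fin n) (hne : h₁ ≠ h₂)
    (A N' : ℕ)
    (hA : A = {p : (Fin n → ZMod 2) × (Fin n → ZMod 2) | p.1 ∈ C ∧ p.2 ∈ C ∧
        nab 0 0 p.1 p.2 = i ∧ nab 0 1 p.1 p.2 = j ∧
        nab 1 0 p.1 p.2 = k ∧ nab 1 1 p.1 p.2 = l}.ncard)
    (hN' : N' = {p : (Fin n → ZMod 2) × (Fin n → ZMod 2) | p.1 ∈ C ∧ p.2 ∈ C ∧
        nab 0 0 p.1 p.2 = i ∧ nab 0 1 p.1 p.2 = j ∧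
        nab 1 0 p.1 p.2 = k ∧ nab 1 1 p.1 p.2 = l ∧
        p.1 h₁ = 0 ∧ p.2 h₁ = 1 ∧ p.1 h₂ = 1 ∧ p.2 h₂ = 0}.ncard) :
    n * (n - 1) * N' = j * k * A := by
  set S := codePairs C i j k l
  have hA' : A = #S := by
    rw [hA, ← Set.ncard_coe_finset]
    congr 1
    ext p
    exact mem_codePairs.symm
  have hN'' : N' = #{p ∈ S | SwapPatternAt h₁ h₂ p} := by
    rw [hN', ← Set.ncard_coe_finset]
    congr 1
    ext p
    rw [mem_coe, mem_filter, mem_codePairs, Set.mem_ofPred_eq]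
    simp only [SwapPatternAt, and_assoc]
  have hconst : ∀ x ∈ (univ : Finset (Fin n)).offDiag,
      #{p ∈ S | SwapPatternAt x.1 x.2 p} = N' := by
    rintro ⟨a, b⟩ hab
    obtain ⟨σ, hσ, rfl, rfl⟩ := h2trans h₁ h₂ a b hne (mem_offDiag.1 hab).2.2
    rw [hN'', card_filter_swapPatternAt_perm S σ (hσ.mem_codePairs_comp_iff i j k l)]
  have hweights : ∀ p ∈ S, nab 0 1 p.1 p.2 * nab 1 0 p.1 p.2 = j * k := fun p hp => by
    obtain ⟨-, -, -, hj, hk, -⟩ := mem_codePairs.1 hp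
    rw [hj, hk]
  calc n * (n - 1) * N'
      = ∑ x ∈ (univ : Finset (Fin n)).offDiag, #{p ∈ S | SwapPatternAt x.1 x.2 p} := by
        rw [sum_congr rfl hconst, sum_const, offDiag_card, card_univ, Fintype.card_fin,
          ← Nat.mul_sub_one, smul_eq_mul]
    _ = ∑ p ∈ S, nab 0 1 p.1 p.2 * nab 1 0 p.1 p.2 := sum_card_filter_swapPatternAt S
    _ = j * k * A := by rw [sum_congr rfl hweights, sum_const, smul_eq_mul, hA', mul_comm]

/-- Counting content of **Proposition 7**: if the automorphism group of a binary code `C` of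
length `n` acts 2-transitively on the coordinates, `A` counts the pairs of codewords with
pattern counts `(i, j, k, l)`, and `N'` counts those pairs that in addition have pattern `01`
at position `h₁` and pattern `10` at position `h₂` (with `h₁ ≠ h₂`), then
`n(n−1) · N' = j·k · A`. -/
theorem two_transitive_aut_pattern_count
    (n : ℕ) (C : Submodule (ZMod 2) (Fin n → ZMod 2))
    (h2trans : ∀ h₁ h₂ h₁' h₂' : Fin n, h₁ ≠ h₂ → h₁' ≠ h₂' →
        ∃ σ : Equiv.Perm (Fin n), IsCodeAut C σ ∧ σ h₁ = h₁' ∧ σ h₂ = h₂')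
    (i j k l : ℕ) (hsum : i + j + k + l = n)
    (h₁ h₂ : Fin n) (hne : h₁ ≠ h₂)
    (A N' : ℕ)
    (hA : A = {p : (Fin n → ZMod 2) × (Fin n → ZMod 2) | p.1 ∈ C ∧ p.2 ∈ C ∧
        nab 0 0 p.1 p.2 = i ∧ nab 0 1 p.1 p.2 = j ∧
        nab 1 0 p.1 p.2 = k ∧ nab 1 1 p.1 p.2 = l}.ncard)
    (hN' : N' = {p : (Fin n → ZMod 2) × (Fin n → ZMod 2) | p.1 ∈ C ∧ p.2 ∈ C ∧
        nab 0 0 p.1 p.2 = i ∧ nab 0 1 p.1 p.2 = j ∧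
        nab 1 0 p.1 p.2 = k ∧ nab 1 1 p.1 p.2 = l ∧
        p.1 h₁ = 0 ∧ p.2 h₁ = 1 ∧ p.1 h₂ = 1 ∧ p.2 h₂ = 0}.ncard) :
    n * (n - 1) * N' = j * k * A :=
  two_transitive_aut_pattern_count_general n C h2trans i j k l h₁ h₂ hne A N' hA hN'
end
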